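/- For every integer n ≥ 10⁵ one has |(1/(24n+1)) · ∫_{n^{−1/8} ≤ |x| ≤ 1} cot((π/2)·(x/√6 + 1/2)) · (√(1−x²) − 3√2/(π·√(24n+1))) · exp((π/(3√2))·√((1−x²)(24n+1))) dx| ≤ (14/(24n+1)) · exp(2π·√(n/3) − π·n^{1/4}/√3). -/

import Mathlib

open Real MeasureTheory

lemma cot_bound7 {x : ℝ} (hx : |x| ≤ 1) :
    |Real.cot (π / 2 * (x / Real.sqrt 6 + 1 / 2))| ≤ 7 := by
  have h6 : Real.sqrt 6 ^ 2 = 6 := Real.sq_sqrt (by norm_num)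
  have h6l : 2.449 < Real.sqrt 6 := by nlinarith [Real.sqrt_nonneg 6]
  have h6u : Real.sqrt 6 < 2.45 := by nlinarith [Real.sqrt_nonneg 6]
  have hs6 : (0:ℝ) < Real.sqrt 6 := by linarith
  have hx1 : -1 ≤ x := neg_le_of_abs_le hx
  have hx2 : x ≤ 1 := le_of_abs_le hx
  have hl : -1 / Real.sqrt 6 ≤ x / Real.sqrt 6 := by gcongr
  have hu : x / Real.sqrt 6 ≤ 1 / Real.sqrt 6 := by gcongr
  have hinv : (1:ℝ) / Real.sqrt 6 = Real.sqrt 6 / 6 := by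
    rw [div_eq_div_iff (ne_of_gt hs6) (by norm_num)]; nlinarith
  have hpi := Real.pi_gt_d6
  have hpi2 := Real.pi_lt_d2
  set t := π / 2 * (x / Real.sqrt 6 + 1 / 2) with ht
  have htl : 1 / 7 ≤ t := by
    have : π / 2 * (-1 / Real.sqrt 6 + 1 / 2) ≤ t := by
      apply mul_le_mul_of_nonneg_left (by linarith) (by positivity)
    have h2 : -1 / Real.sqrt 6 = -(Real.sqrt 6 / 6) := by
      rw [neg_div, hinv]
    rw [h2] at this
    nlinarith
  have ht0 : 0 < t := lt_of_lt_of_le (by norm_num) htl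
  have ht2 : t < π / 2 := by
    have h2 : x / Real.sqrt 6 + 1 / 2 < 1 := by
      rw [hinv] at hu; nlinarith
    calc t < π / 2 * 1 := by apply mul_lt_mul_of_pos_left h2 (by positivity)
    _ = π / 2 := by ring
  have hsin : 0 < Real.sin t := Real.sin_pos_of_pos_of_lt_pi ht0 (by linarith)
  have hcos : 0 < Real.cos t := Real.cos_pos_of_mem_Ioo ⟨by linarith, ht2⟩
  have htan := Real.lt_tan ht0 ht2
  rw [Real.tan_eq_sin_div_cos] at htan
  have hcot : Real.cot t = Real.cos t / Real.sin t := Real.cot_eq_cos_div_sin t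
  have hcotpos : 0 ≤ Real.cot t := by rw [hcot]; positivity
  rw [abs_of_nonneg hcotpos, hcot]
  rw [div_le_iff₀ hsin]
  have : t * Real.cos t < Real.sin t := by
    rw [lt_div_iff₀ hcos] at htan; linarith
  nlinarith

lemma exp_arg_bound11 {m x : ℝ} (hm : (10:ℝ)^5 ≤ m)
    (hx1 : m ^ (-(1:ℝ)/8) ≤ |x|) :
    π / (3 * Real.sqrt 2) * Real.sqrt ((1 - x ^ 2) * (24 * m + 1)) ≤
      2 * π * Real.sqrt (m / 3) - π * m ^ ((1:ℝ)/4) / Real.sqrt 3 := by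
  have hm0 : (0:ℝ) < m := by norm_num at hm ⊢; linarith
  set a := m ^ ((1:ℝ)/4) with ha
  have ha1 : 1 ≤ a := Real.one_le_rpow (by linarith) (by norm_num)
  have ha0 : 0 < a := by linarith
  have ha4 : a ^ 4 = m := by
    rw [ha, ← Real.rpow_natCast (m ^ ((1:ℝ)/4)) 4, ← Real.rpow_mul hm0.le]
    norm_num
  have ha2 : Real.sqrt m = a ^ 2 := by
    rw [ha, ← Real.rpow_natCast (m ^ ((1:ℝ)/4)) 2, ← Real.rpow_mul hm0.le,
      Real.sqrt_eq_rpow]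
    norm_num
  have hxsq : a⁻¹ ≤ x ^ 2 := by
    have h1 : (m ^ (-(1:ℝ)/8)) ^ 2 ≤ |x| ^ 2 := by
      apply pow_le_pow_left₀ (Real.rpow_nonneg hm0.le _) hx1
    rw [sq_abs] at h1
    rw [← Real.rpow_natCast (m ^ (-(1:ℝ)/8)) 2, ← Real.rpow_mul hm0.le] at h1
    push_cast at h1
    have : m ^ ((-(1:ℝ)/8) * 2) = a⁻¹ := by
      rw [ha, ← Real.rpow_neg_one (m ^ ((1:ℝ)/4)), ← Real.rpow_mul hm0.le]
      norm_num
    rwa [this] at h1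
  have key : (1 - x ^ 2) * (24 * m + 1) ≤ 6 * (2 * a ^ 2 - a) ^ 2 := by
    have h1 : 1 - x ^ 2 ≤ 1 - a⁻¹ := by linarith
    have h2 : (1 - x ^ 2) * (24 * m + 1) ≤ (1 - a⁻¹) * (24 * m + 1) := by
      apply mul_le_mul_of_nonneg_right h1 (by nlinarith)
    have h3 : (1 - a⁻¹) * (24 * m + 1) ≤ 6 * (2 * a ^ 2 - a) ^ 2 := by
      rw [← ha4]
      have hai : a * a⁻¹ = 1 := mul_inv_cancel₀ (ne_of_gt ha0)
      nlinarith [sq_nonneg a, sq_nonneg (a-1), mul_pos ha0 ha0]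
    linarith
  have hq : 0 ≤ 2 * a ^ 2 - a := by nlinarith
  have hs : Real.sqrt ((1 - x ^ 2) * (24 * m + 1)) ≤ Real.sqrt 6 * (2 * a ^ 2 - a) := by
    calc Real.sqrt ((1 - x ^ 2) * (24 * m + 1)) ≤ Real.sqrt (6 * (2 * a ^ 2 - a) ^ 2) :=
          Real.sqrt_le_sqrt key
      _ = Real.sqrt 6 * (2 * a ^ 2 - a) := by
          rw [Real.sqrt_mul (by norm_num), Real.sqrt_sq hq]
  have h2 : Real.sqrt 2 ^ 2 = 2 := Real.sq_sqrt (by norm_num)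
  have h3 : Real.sqrt 3 ^ 2 = 3 := Real.sq_sqrt (by norm_num)
  have h23 : Real.sqrt 2 * Real.sqrt 3 = Real.sqrt 6 := by
    rw [← Real.sqrt_mul (by norm_num)]; norm_num
  have h2p : (0:ℝ) < Real.sqrt 2 := Real.sqrt_pos.mpr (by norm_num)
  have h3p : (0:ℝ) < Real.sqrt 3 := Real.sqrt_pos.mpr (by norm_num)
  have hm3 : Real.sqrt (m / 3) = a ^ 2 / Real.sqrt 3 := by
    rw [Real.sqrt_div hm0.le, ha2]
  rw [hm3]
  have hrhs : 2 * π * (a ^ 2 / Real.sqrt 3) - π * a / Real.sqrt 3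
      = π / (3 * Real.sqrt 2) * (Real.sqrt 6 * (2 * a ^ 2 - a)) := by
    rw [← h23]
    field_simp
    linear_combination (1 - 2 * a) * h3
  rw [hrhs]
  apply mul_le_mul_of_nonneg_left hs
  positivity

theorem stmt11 :
    ∀ n : ℕ, 10 ^ 5 ≤ n →
      |(1 / (24 * (n:ℝ) + 1)) *
          ∫ x in {x : ℝ | (n:ℝ) ^ (-(1:ℝ)/8) ≤ |x| ∧ |x| ≤ 1},
            Real.cot (π / 2 * (x / Real.sqrt 6 + 1 / 2)) *
              (Real.sqrt (1 - x ^ 2) - 3 * Real.sqrt 2 / (π * Real.sqrt (24 * (n:ℝ) + 1))) *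
              Real.exp (π / (3 * Real.sqrt 2) * Real.sqrt ((1 - x ^ 2) * (24 * (n:ℝ) + 1)))| ≤
        14 / (24 * (n:ℝ) + 1) *
          Real.exp (2 * π * Real.sqrt ((n:ℝ) / 3) - π * (n:ℝ) ^ ((1:ℝ)/4) / Real.sqrt 3) := by
  intro n hn
  have hm : (10:ℝ)^5 ≤ (n:ℝ) := by exact_mod_cast hn
  have hm0 : (0:ℝ) < (n:ℝ) := by norm_num at hm ⊢; linarith
  set m := (n:ℝ) with hmdef
  set S : Set ℝ := {x : ℝ | m ^ (-(1:ℝ)/8) ≤ |x| ∧ |x| ≤ 1} with hS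
  set E : ℝ := 2 * π * Real.sqrt (m / 3) - π * m ^ ((1:ℝ)/4) / Real.sqrt 3 with hE
  have hSm : MeasurableSet S := by
    have : S = abs ⁻¹' (Set.Icc (m ^ (-(1:ℝ)/8)) 1) := by
      ext y; simp [hS, Set.mem_Icc]
    rw [this]
    exact measurable_abs measurableSet_Icc
  have hSsub : S ⊆ Set.Icc (-1 : ℝ) 1 := by
    intro y hy
    exact abs_le.mp hy.2
  have hvol : volume S ≤ ENNReal.ofReal 2 := by
    calc volume S ≤ volume (Set.Icc (-1 : ℝ) 1) := measure_mono hSsub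
      _ = ENNReal.ofReal 2 := by rw [Real.volume_Icc]; norm_num
  have hfin : volume S < ⊤ := lt_of_le_of_lt hvol (by norm_num)
  have hvol2 : (volume S).toReal ≤ 2 :=
    ENNReal.toReal_le_of_le_ofReal (by norm_num) hvol
  -- pointwise bound
  have hbound : ∀ x ∈ S, ‖Real.cot (π / 2 * (x / Real.sqrt 6 + 1 / 2)) *
      (Real.sqrt (1 - x ^ 2) - 3 * Real.sqrt 2 / (π * Real.sqrt (24 * m + 1))) *
      Real.exp (π / (3 * Real.sqrt 2) * Real.sqrt ((1 - x ^ 2) * (24 * m + 1)))‖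
      ≤ 7 * Real.exp E := by
    intro x hx
    obtain ⟨hx1, hx2⟩ := hx
    rw [Real.norm_eq_abs, abs_mul, abs_mul]
    have hA : |Real.cot (π / 2 * (x / Real.sqrt 6 + 1 / 2))| ≤ 7 := cot_bound7 hx2
    have hB : |Real.sqrt (1 - x ^ 2) - 3 * Real.sqrt 2 / (π * Real.sqrt (24 * m + 1))| ≤ 1 := by
      have hs1 : Real.sqrt (1 - x ^ 2) ≤ 1 := Real.sqrt_le_one.mpr (by nlinarith [sq_nonneg x])
      have hs0 : 0 ≤ Real.sqrt (1 - x ^ 2) := Real.sqrt_nonneg _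
      set c := 3 * Real.sqrt 2 / (π * Real.sqrt (24 * m + 1)) with hc
      have hc0 : 0 ≤ c := by
        apply div_nonneg (by positivity)
        positivity
      have hc1 : c ≤ 1 := by
        rw [hc, div_le_one (by positivity)]
        have h2u : Real.sqrt 2 ≤ 2 := by
          nlinarith [Real.sq_sqrt (show (0:ℝ) ≤ 2 by norm_num), Real.sqrt_nonneg 2]
        have hsq : (2:ℝ) ≤ Real.sqrt (24 * m + 1) := by
          rw [show (2:ℝ) = Real.sqrt 4 from by
            rw [show (4:ℝ) = 2^2 by norm_num, Real.sqrt_sq (by norm_num)]]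
          apply Real.sqrt_le_sqrt
          nlinarith
        nlinarith [Real.pi_gt_three]
      rw [abs_le]
      constructor <;> linarith
    have hC : |Real.exp (π / (3 * Real.sqrt 2) * Real.sqrt ((1 - x ^ 2) * (24 * m + 1)))|
        ≤ Real.exp E := by
      rw [abs_of_pos (Real.exp_pos _), Real.exp_le_exp, hE]
      exact exp_arg_bound11 hm hx1
    calc |Real.cot (π / 2 * (x / Real.sqrt 6 + 1 / 2))| *
          |Real.sqrt (1 - x ^ 2) - 3 * Real.sqrt 2 / (π * Real.sqrt (24 * m + 1))| *
          |Real.exp (π / (3 * Real.sqrt 2) * Real.sqrt ((1 - x ^ 2) * (24 * m + 1)))|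
        ≤ 7 * 1 * Real.exp E := by
          apply mul_le_mul (mul_le_mul hA hB (abs_nonneg _) (by norm_num)) hC
            (abs_nonneg _) (by positivity)
      _ = 7 * Real.exp E := by ring
  have hI : ‖∫ x in S, Real.cot (π / 2 * (x / Real.sqrt 6 + 1 / 2)) *
      (Real.sqrt (1 - x ^ 2) - 3 * Real.sqrt 2 / (π * Real.sqrt (24 * m + 1))) *
      Real.exp (π / (3 * Real.sqrt 2) * Real.sqrt ((1 - x ^ 2) * (24 * m + 1)))‖
      ≤ (7 * Real.exp E) * (volume S).toReal :=
    norm_setIntegral_le_of_norm_le_const hfin hbound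
  rw [Real.norm_eq_abs] at hI
  have hpos : (0:ℝ) < 24 * m + 1 := by linarith
  rw [abs_mul, abs_of_pos (show (0:ℝ) < 1 / (24 * m + 1) by positivity)]
  have hexp : (0:ℝ) < Real.exp E := Real.exp_pos _
  calc 1 / (24 * m + 1) * |∫ x in S, Real.cot (π / 2 * (x / Real.sqrt 6 + 1 / 2)) *
        (Real.sqrt (1 - x ^ 2) - 3 * Real.sqrt 2 / (π * Real.sqrt (24 * m + 1))) *
        Real.exp (π / (3 * Real.sqrt 2) * Real.sqrt ((1 - x ^ 2) * (24 * m + 1)))|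
      ≤ 1 / (24 * m + 1) * ((7 * Real.exp E) * 2) := by
        apply mul_le_mul_of_nonneg_left ?_ (by positivity)
        calc _ ≤ (7 * Real.exp E) * (volume S).toReal := hI
          _ ≤ (7 * Real.exp E) * 2 := by
              apply mul_le_mul_of_nonneg_left hvol2 (by positivity)
    _ = 14 / (24 * m + 1) * Real.exp E := by ring
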